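/- For z > 0, h > 0, the semiclassical phase-space integral satisfies (2πh)^{-3} ∫_{ℝ³×ℝ³} min(p² - z/|u| + 1, 0) du dp = -z³/(12h³). -/

import Mathlib

/-!
For fixed `p` put `m = ‖p‖ ^ 2 + 1`. In polar coordinates the `u`-integral of
`min (m - z / ‖u‖) 0` is `4π ∫₀^{z/m} (m r² - z r) dr = -2π z³ / (3 m²)`, and
`∫ (‖p‖ ^ 2 + 1)⁻² dp = 4π ∫₀^∞ r² / (r² + 1)² dr = π²`, the antiderivative being
`(arctan r - r / (r² + 1)) / 2`. Since the integrand has constant sign, Fubini applies and the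
phase-space integral is `-2π³ z³ / 3`; the factor `(2πh)⁻³` turns it into `-z³ / (12 h³)`.
-/

open MeasureTheory Real Set Filter Topology

local notation "ℝ³" => EuclideanSpace ℝ (Fin 3)

lemma integral_fun_norm_euclideanSpace_fin_three (f : ℝ → ℝ) :
    ∫ x : ℝ³, f ‖x‖ = 4 * π * ∫ y in Ioi (0 : ℝ), y ^ 2 * f y := by
  rw [integral_fun_norm_addHaar, finrank_euclideanSpace_fin, measureReal_def,
    EuclideanSpace.volume_ball_fin_three]
  simp only [ENNReal.ofReal_one, one_pow, one_mul, smul_eq_mul, nsmul_eq_mul]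
  rw [ENNReal.toReal_ofReal (by positivity)]
  push_cast
  ring

lemma integrable_fun_norm_euclideanSpace_fin_three_iff {f : ℝ → ℝ} :
    Integrable (fun x : ℝ³ => f ‖x‖) ↔ IntegrableOn (fun y => y ^ 2 * f y) (Ioi 0) := by
  rw [integrable_fun_norm_addHaar, finrank_euclideanSpace_fin]
  rfl

section Coulomb

variable {m z y : ℝ}

lemma sq_mul_min_sub_div_of_mem_Ioc (hm : 0 < m) (hy : y ∈ Ioc 0 (z / m)) :
    y ^ 2 * min (m - z / y) 0 = m * y ^ 2 - z * y := by
  have : m ≤ z / y := by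
    rw [le_div_iff₀ hy.1]; have := (le_div_iff₀ hm).1 hy.2; linarith
  rw [min_eq_left (sub_nonpos.2 this)]
  field_simp [hy.1.ne']

lemma sq_mul_min_sub_div_of_mem_sdiff (hm : 0 < m) (hy : y ∈ Ioi 0 \ Ioc 0 (z / m)) :
    y ^ 2 * min (m - z / y) 0 = 0 := by
  have hyz : z < y * m := (div_lt_iff₀ hm).1 (not_le.1 fun h => hy.2 ⟨hy.1, h⟩)
  have : z / y ≤ m := by
    rw [div_le_iff₀ hy.1]; linarith
  rw [min_eq_right (sub_nonneg.2 this), mul_zero]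

lemma integrableOn_sq_mul_min_sub_div (hm : 0 < m) :
    IntegrableOn (fun y => y ^ 2 * min (m - z / y) 0) (Ioi 0) := by
  refine IntegrableOn.of_forall_sdiff_eq_zero ?_ measurableSet_Ioi
    fun _ hy => sq_mul_min_sub_div_of_mem_sdiff hm hy
  exact (Continuous.integrableOn_Ioc (f := fun y => m * y ^ 2 - z * y) (by fun_prop)).congr_fun
    (fun _ hy => (sq_mul_min_sub_div_of_mem_Ioc hm hy).symm) measurableSet_Ioc

lemma integral_sq_mul_min_sub_div (hz : 0 ≤ z) (hm : 0 < m) :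
    ∫ y in Ioi 0, y ^ 2 * min (m - z / y) 0 = -(z ^ 3 / (6 * m ^ 2)) := by
  rw [setIntegral_eq_of_subset_of_forall_sdiff_eq_zero measurableSet_Ioi Ioc_subset_Ioi_self
      fun _ hy => sq_mul_min_sub_div_of_mem_sdiff hm hy,
    setIntegral_congr_fun measurableSet_Ioc fun _ hy => sq_mul_min_sub_div_of_mem_Ioc hm hy,
    ← intervalIntegral.integral_of_le (div_nonneg hz hm.le),
    intervalIntegral.integral_sub ((intervalIntegral.intervalIntegrable_pow 2).const_mul m)
      (intervalIntegral.intervalIntegrable_id.const_mul z), intervalIntegral.integral_const_mul,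
    intervalIntegral.integral_const_mul, integral_pow, integral_id]
  norm_num
  field_simp
  ring

lemma integrable_min_sub_div_norm (hm : 0 < m) :
    Integrable (fun u : ℝ³ => min (m - z / ‖u‖) 0) :=
  integrable_fun_norm_euclideanSpace_fin_three_iff.2 (integrableOn_sq_mul_min_sub_div hm)

lemma integral_min_sub_div_norm (hz : 0 ≤ z) (hm : 0 < m) :
    ∫ u : ℝ³, min (m - z / ‖u‖) 0 = -(2 * π * z ^ 3 / 3) * (m ^ 2)⁻¹ := by
  rw [integral_fun_norm_euclideanSpace_fin_three (fun y => min (m - z / y) 0),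
    integral_sq_mul_min_sub_div hz hm]
  field_simp
  ring

end Coulomb

lemma hasDerivAt_arctan_sub_div_sq_add_one (y : ℝ) :
    HasDerivAt (fun x => (arctan x - x / (x ^ 2 + 1)) / 2) (y ^ 2 * ((y ^ 2 + 1) ^ 2)⁻¹) y := by
  have h := (((hasDerivAt_arctan y).sub
    ((hasDerivAt_id' y).div ((hasDerivAt_pow 2 y).add_const 1) (by positivity))).div_const 2)
  refine h.congr_deriv ?_
  field_simp
  ring

lemma tendsto_arctan_sub_div_sq_add_one_atTop :
    Tendsto (fun x => (arctan x - x / (x ^ 2 + 1)) / 2) atTop (𝓝 (π / 4)) := by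
  have h_rat : Tendsto (fun x : ℝ => x / (x ^ 2 + 1)) atTop (𝓝 0) := by
    refine tendsto_of_tendsto_of_tendsto_of_le_of_le' tendsto_const_nhds tendsto_inv_atTop_zero
      ?_ ?_
    · filter_upwards [eventually_ge_atTop 0] with x hx using by positivity
    · filter_upwards [eventually_gt_atTop 0] with x hx
      rw [div_le_iff₀ (by positivity)]
      field_simp
      nlinarith
  convert ((tendsto_arctan_atTop.mono_right nhdsWithin_le_nhds).sub h_rat).div_const 2 using 2
  ring

lemma integrableOn_sq_mul_inv_sq_add_one_sq :
    IntegrableOn (fun y : ℝ => y ^ 2 * ((y ^ 2 + 1) ^ 2)⁻¹) (Ioi 0) :=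
  integrableOn_Ioi_deriv_of_nonneg' (fun y _ => hasDerivAt_arctan_sub_div_sq_add_one y)
    (fun y _ => by positivity) tendsto_arctan_sub_div_sq_add_one_atTop

lemma integral_sq_mul_inv_sq_add_one_sq :
    ∫ y in Ioi 0, y ^ 2 * ((y ^ 2 + 1) ^ 2)⁻¹ = π / 4 := by
  rw [integral_Ioi_of_hasDerivAt_of_nonneg' (fun y _ => hasDerivAt_arctan_sub_div_sq_add_one y)
    (fun y _ => by positivity) tendsto_arctan_sub_div_sq_add_one_atTop]
  simp

lemma integrable_inv_norm_sq_add_one_sq :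
    Integrable (fun p : ℝ³ => ((‖p‖ ^ 2 + 1) ^ 2)⁻¹) :=
  integrable_fun_norm_euclideanSpace_fin_three_iff.2 integrableOn_sq_mul_inv_sq_add_one_sq

lemma integral_inv_norm_sq_add_one_sq :
    ∫ p : ℝ³, ((‖p‖ ^ 2 + 1) ^ 2)⁻¹ = π ^ 2 := by
  rw [integral_fun_norm_euclideanSpace_fin_three (fun y => ((y ^ 2 + 1) ^ 2)⁻¹),
    integral_sq_mul_inv_sq_add_one_sq]
  ring

lemma integral_prod_symm_of_nonpos {α β : Type*} [MeasurableSpace α] [MeasurableSpace β]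
    {μ : Measure α} {ν : Measure β} [SFinite μ] [SFinite ν] {f : α × β → ℝ}
    (hf : AEStronglyMeasurable f (μ.prod ν)) (hf_nonpos : ∀ x, f x ≤ 0)
    (h_inner : ∀ y, Integrable (fun x => f (x, y)) μ)
    (h_outer : Integrable (fun y => ∫ x, f (x, y) ∂μ) ν) :
    ∫ x, f x ∂(μ.prod ν) = ∫ y, ∫ x, f (x, y) ∂μ ∂ν := by
  refine integral_prod_symm f ((integrable_prod_iff' hf).2 ⟨ae_of_all _ h_inner, ?_⟩)
  refine h_outer.neg.congr (ae_of_all _ fun y => ?_)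
  simp only [Pi.neg_apply, ← integral_neg, Real.norm_of_nonpos (hf_nonpos _)]

/-- Semiclassical phase-space integral for the Coulomb potential:
`(2πh)⁻³ ∫∫ (p² - z/|u| + 1)_- du dp = -z³/(12h³)`. -/
theorem coulomb_phase_space_integral (z h : ℝ) (hz : 0 < z) (hh : 0 < h) :
    (2 * Real.pi * h) ^ (-(3 : ℝ)) *
      (∫ up : EuclideanSpace ℝ (Fin 3) × EuclideanSpace ℝ (Fin 3),
        min (‖up.2‖ ^ 2 - z / ‖up.1‖ + 1) 0)
      = -z ^ 3 / (12 * h ^ 3) := by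
  have h_inner (p : ℝ³) : ∫ u : ℝ³, min (‖p‖ ^ 2 - z / ‖u‖ + 1) 0 =
      -(2 * π * z ^ 3 / 3) * ((‖p‖ ^ 2 + 1) ^ 2)⁻¹ := by
    simp only [sub_add_eq_add_sub]
    exact integral_min_sub_div_norm hz.le (by positivity)
  have h_phase :
      ∫ up : ℝ³ × ℝ³, min (‖up.2‖ ^ 2 - z / ‖up.1‖ + 1) 0 = -(2 * π ^ 3 * z ^ 3 / 3) := by
    rw [Measure.volume_eq_prod, integral_prod_symm_of_nonpos (by fun_prop)
      (fun _ => min_le_right _ _) (fun p => ?_) ?_]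
    · simp only [h_inner, integral_const_mul, integral_inv_norm_sq_add_one_sq]
      ring
    · simpa only [h_inner] using integrable_inv_norm_sq_add_one_sq.const_mul _
    · simp only [sub_add_eq_add_sub]
      exact integrable_min_sub_div_norm (by positivity)
  rw [h_phase, rpow_neg (by positivity), rpow_ofNat]
  field_simp
  ring
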